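/- arXiv:1609.00400 — 3 statements merged into one kernel-verified Lean document; each statement's English description precedes it below -/
import Mathlib

section
/- Let Λ be the coweight lattice of a split reductive group G with positive-coroot cone Λ^{pos,Q}_G in Λ⊗Q, and let Λ̌^+_G be the dominant weights. For a subset S of Λ⊗Q, the following are equivalent: (i) for every dominant weight λ̌ ∈ Λ̌^+_G, the set of values ⟨λ̌, s⟩ for s ∈ S is bounded below in Q; (ii) there exists a subset S₀ of Λ⊗Q with compact closure in Λ⊗R such that S ⊆ S₀ + Λ^{pos,Q}_G. -/
/-!
Dominant weights are the integral points of the dual cone `C^∨` of the positive-coroot cone `C`,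
and clearing denominators extends (i) to all of `C^∨`. By the Minkowski–Weyl theorem, a
consequence of Fourier–Motzkin elimination, `C^∨` is generated by finitely many vectors `b`, so (i)
says that `S` lies in a polyhedron `{x | ∀ b, β_b ≤ ⟨b, x⟩}`. Homogenizing and applying
Minkowski–Weyl once more writes this polyhedron as the convex hull of finitely many points plus its
recession cone `C^∨∨ = C`, which gives (ii) with `S₀` a polytope. Conversely, a dominant weight is
bounded below on the compact set `closure S₀` and non-negative on `C`.
-/

open scoped BigOperators

noncomputable section

-- The coweight lattice `Λ` is modelled as `ι → ℤ`, so that `Λ⊗ℚ = ι → ℚ` and `Λ⊗ℝ = ι → ℝ`; the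
-- positive coroots form an arbitrary finite set `Φ ⊆ Λ⊗ℚ`, and the dominant weights are the
-- lattice vectors pairing non-negatively with every element of `Φ`.
variable {ι : Type*} [Fintype ι]

/-- The pairing `⟨·,·⟩` between weights and coweights. -/
def pairQ (x y : ι → ℚ) : ℚ := ∑ i, x i * y i

/-- The rational cone `Λ^{pos,ℚ}_G` spanned by the finite set `Φ` of positive coroots. -/
def ratCone (Φ : Finset (ι → ℚ)) : Set (ι → ℚ) :=
  {μ | ∃ c : (ι → ℚ) → ℚ, (∀ x, 0 ≤ c x) ∧ μ = ∑ x ∈ Φ, c x • x}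

/-- The embedding `Λ⊗ℚ → Λ⊗ℝ`. -/
def castR (v : ι → ℚ) : ι → ℝ := fun i => (v i : ℝ)

section FourierMotzkin

variable {𝕜 α : Type*} [Field 𝕜] [LinearOrder 𝕜] [IsStrictOrderedRing 𝕜]

theorem exists_nonneg_forall_mul_le_iff (T : Finset α) (a b : α → 𝕜) :
    (∃ t, 0 ≤ t ∧ ∀ w ∈ T, t * a w ≤ b w) ↔
      (∀ w ∈ T, 0 ≤ a w → 0 ≤ b w) ∧
        ∀ w ∈ T, 0 < a w → ∀ u ∈ T, a u < 0 → a u * b w ≤ a w * b u := by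
  constructor
  · rintro ⟨t, ht, htT⟩
    refine ⟨fun w hw haw => (mul_nonneg ht haw).trans (htT w hw), fun w hw haw u hu hau => ?_⟩
    nlinarith [htT w hw, htT u hu]
  · rintro ⟨hnonneg, hpair⟩
    classical
    -- take for `t` the largest of `0` and the lower bounds `b u / a u`, `a u < 0`
    set L := insert 0 ((T.filter (a · < 0)).image fun u => b u / a u)
    have hL : L.Nonempty := Finset.insert_nonempty _ _
    refine ⟨L.max' hL, L.le_max' 0 (Finset.mem_insert_self _ _), fun w hw => ?_⟩
    rcases lt_trichotomy (a w) 0 with haw | haw | haw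
    · rw [← div_le_iff_of_neg haw]
      exact L.le_max' _ (Finset.mem_insert_of_mem (Finset.mem_image_of_mem _ (by simp [hw, haw])))
    · simpa [haw] using hnonneg w hw haw.ge
    · rw [← le_div_iff₀ haw]
      refine L.max'_le hL _ fun l hl => ?_
      simp only [L, Finset.mem_insert, Finset.mem_image, Finset.mem_filter] at hl
      rcases hl with rfl | ⟨u, ⟨hu, hau⟩, rfl⟩
      · exact div_nonneg (hnonneg w hw haw.le) haw.le
      · rw [div_le_iff_of_neg hau, div_mul_eq_mul_div, div_le_iff₀ haw]
        linarith [hpair w hw haw u hu hau]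

end FourierMotzkin

theorem Matrix.dotProductBilin_flip {R n : Type*} [CommSemiring R] [Fintype n] :
    (dotProductBilin R R : (n → R) →ₗ[R] (n → R) →ₗ[R] R).flip = dotProductBilin R R := by
  ext x y
  exact dotProduct_comm y x

open Matrix Pointwise

namespace PointedCone

section Field

variable {𝕜 M N : Type*} [Field 𝕜] [LinearOrder 𝕜] [IsStrictOrderedRing 𝕜]
  [AddCommGroup M] [Module 𝕜 M] [AddCommGroup N] [Module 𝕜 N]

theorem mem_sup_hull_singleton {C : PointedCone 𝕜 N} {v x : N} :
    x ∈ C ⊔ hull 𝕜 {v} ↔ ∃ t : 𝕜, 0 ≤ t ∧ x - t • v ∈ C := by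
  simp only [Submodule.mem_sup, Submodule.mem_span_singleton]
  constructor
  · rintro ⟨y, hy, _, ⟨t, rfl⟩, rfl⟩
    exact ⟨t, t.2, by simpa [Nonneg.coe_smul] using hy⟩
  · rintro ⟨t, ht, hx⟩
    exact ⟨_, hx, _, ⟨⟨t, ht⟩, rfl⟩, by simp [Nonneg.mk_smul]⟩

/-- Fourier–Motzkin elimination of `t` from `x - t • v ∈ dual p T`. -/
theorem DualFG.sup_hull_singleton {p : M →ₗ[𝕜] N →ₗ[𝕜] 𝕜} {C : PointedCone 𝕜 N}
    (hC : C.DualFG p) (v : N) : (C ⊔ hull 𝕜 {v}).DualFG p := by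
  classical
  obtain ⟨T, rfl⟩ := hC
  refine ⟨T.filter (0 ≤ p · v) ∪ Finset.image₂ (fun w u => p w v • u - p u v • w)
    (T.filter (0 < p · v)) (T.filter (p · v < 0)), ?_⟩
  ext x
  simp only [mem_sup_hull_singleton, mem_dual, Finset.mem_coe, Finset.forall_mem_union,
    Finset.forall_mem_image₂, Finset.mem_filter, and_imp, map_sub, map_smul, LinearMap.sub_apply,
    LinearMap.smul_apply, smul_eq_mul, sub_nonneg]
  exact (exists_nonneg_forall_mul_le_iff T (p · v) (p · x)).symm

end Field

section DotProduct

variable {𝕜 n : Type*} [Field 𝕜] [LinearOrder 𝕜] [IsStrictOrderedRing 𝕜] [Fintype n]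

theorem DualFG.bot : (⊥ : PointedCone 𝕜 (n → 𝕜)).DualFG (dotProductBilin 𝕜 𝕜) := by
  classical
  refine ⟨Finset.univ.image (Pi.single · 1) ∪ Finset.univ.image (-Pi.single · 1), ?_⟩
  ext x
  simp only [mem_dual, Finset.mem_coe, Finset.forall_mem_union, Finset.forall_mem_image,
    Finset.mem_univ, forall_const, dotProductBilin_apply_apply, neg_dotProduct,
    single_one_dotProduct, neg_nonneg, Submodule.mem_bot, ← forall_and]
  simp [le_antisymm_iff, Pi.le_def, forall_and, and_comm]

/-- Weyl's theorem. -/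
theorem DualFG.of_fg {C : PointedCone 𝕜 (n → 𝕜)} (hC : C.FG) :
    C.DualFG (dotProductBilin 𝕜 𝕜) := by
  classical
  obtain ⟨s, rfl⟩ := hC
  induction s using Finset.induction_on with
  | empty => simpa using DualFG.bot
  | insert v s _ ih =>
    rw [Finset.coe_insert, Submodule.span_insert, sup_comm]
    exact ih.sup_hull_singleton v

theorem dual_dual_of_fg {C : PointedCone 𝕜 (n → 𝕜)} (hC : C.FG) :
    dual (dotProductBilin 𝕜 𝕜) (dual (dotProductBilin 𝕜 𝕜) (C : Set (n → 𝕜)) : Set (n → 𝕜)) =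
      C := by
  simpa only [dotProductBilin_flip] using (DualFG.of_fg hC).dual_dual_flip

/-- Minkowski's theorem. -/
theorem fg_dual_of_fg {C : PointedCone 𝕜 (n → 𝕜)} (hC : C.FG) :
    (dual (dotProductBilin 𝕜 𝕜) (C : Set (n → 𝕜))).FG := by
  obtain ⟨T, hT⟩ := DualFG.of_fg hC
  have hhull : (hull 𝕜 (T : Set (n → 𝕜))).FG := Submodule.fg_span T.finite_toSet
  convert hhull using 1
  rw [← hT, ← dual_dual_of_fg hhull, dual_hull]

theorem DualFG.fg {C : PointedCone 𝕜 (n → 𝕜)} (hC : C.DualFG (dotProductBilin 𝕜 𝕜)) : C.FG := by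
  obtain ⟨T, rfl⟩ := hC
  rw [← dual_hull]
  exact fg_dual_of_fg (Submodule.fg_span T.finite_toSet)

end DotProduct

end PointedCone

section Homogenization

variable {𝕜 n : Type*}

/-- The point `(t, x)` of `𝕜 × 𝕜ⁿ`, with the extra coordinate indexed by `none`. -/
def homogenize (x : n → 𝕜) (t : 𝕜) : Option n → 𝕜 := fun o => o.elim t x

@[simp] theorem homogenize_none (x : n → 𝕜) (t : 𝕜) : homogenize x t none = t := rfl

@[simp] theorem homogenize_some (x : n → 𝕜) (t : 𝕜) (i : n) : homogenize x t (some i) = x i :=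
  rfl

@[simp] theorem homogenize_comp_some (x : n → 𝕜) (t : 𝕜) : homogenize x t ∘ some = x := rfl

theorem homogenize_dotProduct [Semiring 𝕜] [Fintype n] (x : n → 𝕜) (t : 𝕜) (g : Option n → 𝕜) :
    homogenize x t ⬝ᵥ g = t * g none + x ⬝ᵥ (g ∘ some) := by
  simp [dotProduct, Fintype.sum_option, homogenize]

theorem mem_convexHull_add_hull_of_homogenize_mem_hull [Field 𝕜] [LinearOrder 𝕜]
    [IsStrictOrderedRing 𝕜] {G : Finset (Option n → 𝕜)} (hG : ∀ g ∈ G, 0 ≤ g none) {x : n → 𝕜}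
    (hx : homogenize x 1 ∈ PointedCone.hull 𝕜 (G : Set (Option n → 𝕜))) :
    x ∈ convexHull 𝕜 ((fun g : Option n → 𝕜 => (g none)⁻¹ • (g ∘ some)) ''
        {g ∈ (G : Set (Option n → 𝕜)) | 0 < g none}) +
      (PointedCone.hull 𝕜 ((· ∘ some) '' {g ∈ (G : Set (Option n → 𝕜)) | ¬ 0 < g none}) :
        Set (n → 𝕜)) := by
  classical
  obtain ⟨c, -, hc⟩ := Submodule.mem_span_finset.1 hx
  set Gpos := G.filter (0 < · none)
  have hlevel : ∑ g ∈ Gpos, (c g : 𝕜) * g none = 1 := by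
    rw [Finset.sum_filter_of_ne fun g hg hne => ?_]
    · simpa [← Nonneg.coe_smul] using congrFun hc none
    · exact (hG g hg).lt_of_ne' (right_ne_zero_of_mul hne)
  have hbody : ∑ g ∈ G, (c g : 𝕜) • (g ∘ some) = x := by
    ext i
    simpa [← Nonneg.coe_smul] using congrFun hc (some i)
  refine Set.mem_add.2 ⟨∑ g ∈ Gpos, (c g : 𝕜) • (g ∘ some), ?_,
    ∑ g ∈ G.filter (¬ 0 < · none), (c g : 𝕜) • (g ∘ some), ?_, ?_⟩
  · have hrescale : ∀ g ∈ Gpos,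
        (c g : 𝕜) • (g ∘ some) = ((c g : 𝕜) * g none) • ((g none)⁻¹ • (g ∘ some)) := fun g hg => by
      rw [smul_smul, mul_assoc, mul_inv_cancel₀ (Finset.mem_filter.1 hg).2.ne', mul_one]
    rw [Finset.sum_congr rfl hrescale]
    refine (convex_convexHull 𝕜 _).sum_mem (fun g hg => ?_) hlevel fun g hg => ?_
    · exact mul_nonneg (c g).2 (hG g (Finset.mem_filter.1 hg).1)
    · exact subset_convexHull 𝕜 _ ⟨g, by simpa [Gpos] using hg, rfl⟩
  · simp_rw [Nonneg.coe_smul]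
    exact Submodule.sum_mem _ fun g hg =>
      Submodule.smul_mem _ _ (Submodule.subset_span ⟨g, by simpa using hg, rfl⟩)
  · rw [Finset.sum_filter_add_sum_filter_not, hbody]

end Homogenization

namespace PointedCone

variable {𝕜 n : Type*} [Field 𝕜] [LinearOrder 𝕜] [IsStrictOrderedRing 𝕜] [Fintype n]

open Classical in
/-- The constraints `0 ≤ t` and `β b * t ≤ ⟨b, x⟩`, `b ∈ B`, on `(t, x)`, homogenizing the
polyhedron `{x | ∀ b ∈ B, β b ≤ ⟨b, x⟩}`. -/
def homogenizedConstraints (B : Finset (n → 𝕜)) (β : (n → 𝕜) → 𝕜) : Finset (Option n → 𝕜) :=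
  insert (homogenize 0 1) (B.image fun b => homogenize b (-β b))

theorem mem_dual_homogenizedConstraints {B : Finset (n → 𝕜)} {β : (n → 𝕜) → 𝕜}
    {g : Option n → 𝕜} :
    g ∈ dual (dotProductBilin 𝕜 𝕜) (homogenizedConstraints B β : Set (Option n → 𝕜)) ↔
      0 ≤ g none ∧ ∀ b ∈ B, β b * g none ≤ b ⬝ᵥ (g ∘ some) := by
  simp [homogenizedConstraints, homogenize_dotProduct]

/-- Minkowski's theorem for polyhedra: a polyhedron is a polytope plus its recession cone. -/
theorem setOf_le_dotProduct_subset_convexHull_add_dual (B : Finset (n → 𝕜))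
    (β : (n → 𝕜) → 𝕜) :
    ∃ V : Set (n → 𝕜), V.Finite ∧ {x | ∀ b ∈ B, β b ≤ b ⬝ᵥ x} ⊆
      convexHull 𝕜 V + dual (dotProductBilin 𝕜 𝕜) (B : Set (n → 𝕜)) := by
  obtain ⟨G, hG⟩ : ∃ G : Finset (Option n → 𝕜), hull 𝕜 (G : Set (Option n → 𝕜)) =
      dual (dotProductBilin 𝕜 𝕜) (homogenizedConstraints B β : Set (Option n → 𝕜)) :=
    (DualFG.dual_of_finset _ _).fg
  have hGdual (g) (hg : g ∈ G) : 0 ≤ g none ∧ ∀ b ∈ B, β b * g none ≤ b ⬝ᵥ (g ∘ some) :=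
    mem_dual_homogenizedConstraints.1 (hG ▸ Submodule.subset_span hg)
  have hrec : hull 𝕜 ((· ∘ some) '' {g ∈ (G : Set _) | ¬ 0 < g none}) ≤
      dual (dotProductBilin 𝕜 𝕜) (B : Set (n → 𝕜)) := by
    refine Submodule.span_le.2 ?_
    rintro _ ⟨g, ⟨hgG, hgpos⟩, rfl⟩
    have hnone : g none = 0 := le_antisymm (not_lt.1 hgpos) (hGdual g hgG).1
    exact fun b hb => by simpa [hnone] using (hGdual g hgG).2 b hb
  refine ⟨_, (G.finite_toSet.subset (Set.sep_subset _ _)).image _,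
    fun x hx => Set.add_subset_add_left (SetLike.coe_subset_coe.2 hrec)
      (mem_convexHull_add_hull_of_homogenize_mem_hull (fun g hg => (hGdual g hg).1) ?_)⟩
  rw [hG, mem_dual_homogenizedConstraints]
  exact ⟨zero_le_one, fun b hb => by simpa using hx b hb⟩

end PointedCone

open PointedCone

section Rational

variable {n : Type*}

theorem pairQ_eq_dotProduct [Fintype n] (x y : n → ℚ) : pairQ x y = x ⬝ᵥ y := rfl

theorem ratCone_eq_hull (Φ : Finset (n → ℚ)) : ratCone Φ = hull ℚ (Φ : Set (n → ℚ)) := by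
  ext μ
  constructor
  · rintro ⟨c, hc, rfl⟩
    exact Submodule.sum_mem _ fun x hx =>
      Nonneg.mk_smul (c x) (hc x) x ▸ Submodule.smul_mem _ _ (Submodule.subset_span hx)
  · intro hμ
    obtain ⟨c, -, rfl⟩ := Submodule.mem_span_finset.1 hμ
    exact ⟨fun x => c x, fun x => (c x).2, by simp [Nonneg.coe_smul]⟩

theorem exists_pos_smul_eq_intCast [Fintype n] (v : n → ℚ) :
    ∃ N : ℚ, 0 < N ∧ ∃ z : n → ℤ, (fun i => (z i : ℚ)) = N • v := by
  refine ⟨∏ i, ((v i).den : ℚ), by positivity,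
    fun i => ((∏ j, (v j).den) / (v i).den : ℕ) * (v i).num, funext fun i => ?_⟩
  have hdvd : (v i).den ∣ ∏ j, (v j).den := Finset.dvd_prod_of_mem _ (Finset.mem_univ i)
  have hden : ((v i).den : ℚ) ≠ 0 := by positivity
  simp only [Int.cast_mul, Int.cast_natCast, Nat.cast_div hdvd hden, Pi.smul_apply, smul_eq_mul,
    ← Nat.cast_prod]
  rw [← Rat.mul_den_eq_num]
  field_simp

theorem bddBelow_dotProduct_of_forall_intCast [Fintype n] {S : Set (n → ℚ)}
    {K : PointedCone ℚ (n → ℚ)}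
    (hK : ∀ z : n → ℤ, (fun i => (z i : ℚ)) ∈ K → BddBelow (((fun i => (z i : ℚ)) ⬝ᵥ ·) '' S))
    {b : n → ℚ} (hb : b ∈ K) : BddBelow ((b ⬝ᵥ ·) '' S) := by
  obtain ⟨N, hN, z, hz⟩ := exists_pos_smul_eq_intCast b
  have hNb : N • b ∈ K := Nonneg.mk_smul N hN.le b ▸ Submodule.smul_mem _ _ hb
  obtain ⟨m, hm⟩ := hK z (hz ▸ hNb)
  refine ⟨m / N, ?_⟩
  rintro _ ⟨s, hs, rfl⟩
  have hNs : m ≤ N * (b ⬝ᵥ s) := by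
    simpa only [hz, smul_dotProduct, smul_eq_mul] using hm ⟨s, hs, rfl⟩
  exact (div_le_iff₀' hN).2 hNs

theorem isCompact_closure_castR_convexHull {V : Set (n → ℚ)} (hV : V.Finite) :
    IsCompact (closure (castR '' convexHull ℚ V)) := by
  have hK := (hV.image castR).isCompact_convexHull ℝ
  refine hK.of_isClosed_subset isClosed_closure (closure_minimal ?_ hK.isClosed)
  rw [Set.image_subset_iff]
  refine convexHull_min (Set.image_subset_iff.1 (subset_convexHull ℝ _))
    fun x hx y hy a b ha hb hab => ?_
  have hcast : castR (a • x + b • y) = (a : ℝ) • castR x + (b : ℝ) • castR y := by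
    ext i
    simp [castR]
  rw [Set.mem_preimage, hcast]
  exact convex_convexHull ℝ _ hx hy (by exact_mod_cast ha) (by exact_mod_cast hb)
    (by exact_mod_cast hab)

theorem bddBelow_dotProduct_of_isCompact_closure [Fintype n] {S₀ : Set (n → ℚ)}
    (hS₀ : IsCompact (closure (castR '' S₀))) (w : n → ℚ) : BddBelow ((w ⬝ᵥ ·) '' S₀) := by
  have hcont : Continuous fun y : n → ℝ => castR w ⬝ᵥ y := by fun_prop
  obtain ⟨m, hm⟩ := (hS₀.image hcont).bddBelow
  obtain ⟨q, hq⟩ := exists_rat_lt m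
  refine ⟨q, ?_⟩
  rintro _ ⟨s, hs, rfl⟩
  have hcast : ((w ⬝ᵥ s : ℚ) : ℝ) = castR w ⬝ᵥ castR s := (Rat.castHom ℝ).map_dotProduct w s
  have hms : m ≤ ((w ⬝ᵥ s : ℚ) : ℝ) := hcast ▸ hm ⟨castR s, subset_closure ⟨s, hs, rfl⟩, rfl⟩
  exact_mod_cast hq.le.trans hms

theorem bddBelow_dotProduct_of_forall_sub_mem [Fintype n] {S S₀ : Set (n → ℚ)}
    {C : PointedCone ℚ (n → ℚ)} (hS₀ : IsCompact (closure (castR '' S₀)))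
    (hS : ∀ s ∈ S, ∃ s₀ ∈ S₀, s - s₀ ∈ C) {w : n → ℚ}
    (hw : w ∈ dual (dotProductBilin ℚ ℚ) (C : Set (n → ℚ))) : BddBelow ((w ⬝ᵥ ·) '' S) := by
  obtain ⟨m, hm⟩ := bddBelow_dotProduct_of_isCompact_closure hS₀ w
  refine ⟨m, ?_⟩
  rintro _ ⟨s, hs, rfl⟩
  obtain ⟨s₀, hs₀, hsC⟩ := hS s hs
  have hcone : 0 ≤ (s - s₀) ⬝ᵥ w := hw hsC
  have hs₀m : m ≤ w ⬝ᵥ s₀ := hm ⟨s₀, hs₀, rfl⟩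
  rw [sub_dotProduct, dotProduct_comm s, dotProduct_comm s₀] at hcone
  show m ≤ w ⬝ᵥ s
  linarith

theorem exists_isCompact_closure_forall_sub_mem [Fintype n] {C : PointedCone ℚ (n → ℚ)}
    (hC : C.FG) {S : Set (n → ℚ)}
    (hS : ∀ z : n → ℤ, (fun i => (z i : ℚ)) ∈ dual (dotProductBilin ℚ ℚ) (C : Set (n → ℚ)) →
      BddBelow (((fun i => (z i : ℚ)) ⬝ᵥ ·) '' S)) :
    ∃ S₀ : Set (n → ℚ), IsCompact (closure (castR '' S₀)) ∧ ∀ s ∈ S, ∃ s₀ ∈ S₀, s - s₀ ∈ C := by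
  obtain ⟨B, hB⟩ := fg_dual_of_fg hC
  have hbdd (b) (hb : b ∈ B) : BddBelow ((b ⬝ᵥ ·) '' S) :=
    bddBelow_dotProduct_of_forall_intCast hS (hB ▸ Submodule.subset_span hb)
  choose! β hβ using hbdd
  obtain ⟨V, hVfin, hV⟩ := setOf_le_dotProduct_subset_convexHull_add_dual B β
  refine ⟨convexHull ℚ V, isCompact_closure_castR_convexHull hVfin, fun s hs => ?_⟩
  obtain ⟨s₀, hs₀, r, hr, rfl⟩ := hV fun b hb => hβ b hb ⟨s, hs, rfl⟩
  refine ⟨s₀, hs₀, ?_⟩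
  rwa [add_sub_cancel_left, ← dual_dual_of_fg hC, ← hB, dual_hull]

end Rational

/-- A subset `S ⊆ Λ⊗ℚ` is bounded below in the sense (i) — the values of every
(integral) dominant weight on `S` are bounded below — if and only if (ii) there is a
subset `S₀ ⊆ Λ⊗ℚ` with compact closure in `Λ⊗ℝ` such that `S ⊆ S₀ + Λ^{pos,ℚ}_G`. -/
theorem stmt0 (Φ : Finset (ι → ℚ)) (S : Set (ι → ℚ)) :
    (∀ lamCheck : ι → ℤ, (∀ α ∈ Φ, 0 ≤ pairQ (fun i => (lamCheck i : ℚ)) α) →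
      BddBelow ((fun s => pairQ (fun i => (lamCheck i : ℚ)) s) '' S)) ↔
    (∃ S₀ : Set (ι → ℚ), IsCompact (closure (castR '' S₀)) ∧
      ∀ s ∈ S, ∃ s₀ ∈ S₀, s - s₀ ∈ ratCone Φ) := by
  have hdom (z : ι → ℚ) : (∀ α ∈ Φ, 0 ≤ z ⬝ᵥ α) ↔
      z ∈ dual (dotProductBilin ℚ ℚ) (hull ℚ (Φ : Set (ι → ℚ)) : Set (ι → ℚ)) := by
    simp [dual_hull, dotProduct_comm]
  simp only [pairQ_eq_dotProduct, hdom, ratCone_eq_hull, SetLike.mem_coe]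
  exact ⟨exists_isCompact_closure_forall_sub_mem (Submodule.fg_span Φ.finite_toSet),
    fun ⟨_, hS₀, hS⟩ _ hz => bddBelow_dotProduct_of_forall_sub_mem hS₀ hS hz⟩

end
end

section
/- Let A be the completion of the monoid algebra E[Σ] of a submonoid Σ of a lattice Λ, where Σ generates a strongly convex rational cone and 0 is the only invertible element of Σ, completed at the augmentation ideal (the ideal generated by nonzero elements of Σ). Then A is a local ring, and an element f ∈ A is a unit if and only if its constant coefficient (the coefficient of the identity element 0 ∈ Σ) is nonzero. -/
/-!
Since `0` is the only unit of `Σ`, a sum `λ + μ` in `Σ` vanishes only if both summands do, so the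
augmentation ideal `I` consists exactly of the `f` with vanishing constant coefficient; it is
therefore maximal with residue field `E`. An element of `A` whose image in `E[Σ]/I` is nonzero is a
unit in every `E[Σ]/Iⁿ` (there `I/Iⁿ` is nilpotent), and these inverses are compatible, so they
assemble into an inverse in `A`. Hence the non-units of `A` form the kernel of `A → E[Σ]/I`, and
`A` is local.
-/

open scoped BigOperators

noncomputable section

variable {ι : Type*} [Fintype ι]

/-- The rational cone generated by a set of lattice vectors. -/
def ratConeOfSet (S : Set (ι → ℤ)) : Set (ι → ℚ) :=
  {x | ∃ T : Finset (ι → ℤ), ↑T ⊆ S ∧ ∃ c : (ι → ℤ) → ℚ, (∀ a, 0 ≤ c a) ∧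
    x = ∑ a ∈ T, c a • (fun i => ((a i : ℚ)))}

/-- The augmentation ideal of the monoid algebra `E[Σ]`, spanned by the basis
elements `e^λ` for `λ ≠ 0`. -/
def augIdeal (E : Type*) [Field E] (Sg : AddSubmonoid (ι → ℤ)) :
    Ideal (AddMonoidAlgebra E ↥Sg) :=
  Ideal.span {x | ∃ lam : ↥Sg, (lam : ι → ℤ) ≠ 0 ∧
    x = AddMonoidAlgebra.single lam (1 : E)}

namespace AdicCompletion

variable {R : Type*} [CommRing R] {I : Ideal R}

theorem isUnit_iff_forall_isUnit_val {x : AdicCompletion I R} :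
    IsUnit x ↔ ∀ n, IsUnit (x.val n) := by
  refine ⟨fun hx n => ?_, fun hx => ?_⟩
  · obtain ⟨y, hy⟩ := hx.exists_right_inv
    exact .of_mul_eq_one (y.val n) (by rw [← val_mul, hy, val_one])
  · let y : AdicCompletion I R := ⟨fun n => Ring.inverse (x.val n), fun {m n} hmn => by
      have hinv : x.val m * transitionMap I R hmn (Ring.inverse (x.val n)) = 1 := by
        rw [← x.property hmn, ← transitionMap_map_mul, Ring.mul_inverse_cancel _ (hx n),
          transitionMap_map_one]
      rw [← Ring.inverse_mul_cancel_left _ (transitionMap I R hmn _) (hx m), hinv, mul_one]⟩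
    exact .of_mul_eq_one y (Subtype.ext <| funext fun n => Ring.mul_inverse_cancel _ (hx n))

theorem isUnit_val_of_val_one_ne_zero [I.IsMaximal] {x : AdicCompletion I R} (hx : x.val 1 ≠ 0)
    (n : ℕ) : IsUnit (x.val n) := by
  rcases n.eq_zero_or_pos with rfl | hn
  · have : Subsingleton (R ⧸ (I ^ 0 • ⊤ : Ideal R)) :=
      Ideal.Quotient.subsingleton_iff.mpr (by simp)
    exact isUnit_of_subsingleton _
  obtain ⟨r, hr⟩ := Ideal.Quotient.mk_surjective (x.val n)
  have hrI : r ∉ I := by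
    have hr1 := x.property hn
    rw [← hr, transitionMap_ideal_mk] at hr1
    rw [← hr1, ne_eq, Ideal.Quotient.eq_zero_iff_mem] at hx
    simpa using hx
  rw [← hr, smul_eq_mul, Ideal.mul_top]
  exact Ideal.Quotient.isUnit_mk_pow_of_notMem I hrI

theorem isUnit_iff_val_one_ne_zero [hI : I.IsMaximal] {x : AdicCompletion I R} :
    IsUnit x ↔ x.val 1 ≠ 0 := by
  have : Nontrivial (R ⧸ (I ^ 1 • ⊤ : Ideal R)) :=
    Ideal.Quotient.nontrivial_iff.mpr (by simpa using hI.ne_top)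
  exact ⟨fun hx => (isUnit_iff_forall_isUnit_val.mp hx 1).ne_zero,
    fun hx => isUnit_iff_forall_isUnit_val.mpr (isUnit_val_of_val_one_ne_zero hx)⟩

theorem isLocalRing_of_isMaximal [I.IsMaximal] : IsLocalRing (AdicCompletion I R) := by
  have : Nontrivial (AdicCompletion I R) :=
    nontrivial_of_ne 1 0 fun h => isUnit_iff_val_one_ne_zero.mp isUnit_one (by rw [h]; rfl)
  refine .of_nonunits_add fun a b ha hb => ?_
  simp only [mem_nonunits_iff, isUnit_iff_val_one_ne_zero, not_not] at ha hb ⊢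
  exact (congrArg₂ (· + ·) ha hb).trans (add_zero 0)

end AdicCompletion

namespace AddMonoidAlgebra

variable {k M : Type*} [AddCommMonoid M] [Subsingleton (AddUnits M)]

theorem mem_span_of'_ne_zero_iff [Semiring k] {f : AddMonoidAlgebra k M} :
    f ∈ Ideal.span (of' k M '' {m | m ≠ 0}) ↔ f.coeff 0 = 0 := by
  rw [mem_ideal_span_of'_image]
  refine ⟨fun h => by_contra fun h0 => ?_, fun h m hm => ?_⟩
  · obtain ⟨m, hm, d, hdm⟩ := h 0 (Finsupp.mem_support_iff.mpr h0)
    exact hm (IsAddUnit.of_add_eq_zero_right d hdm.symm).eq_zero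
  · exact ⟨m, fun hm0 => Finsupp.mem_support_iff.mp hm (hm0 ▸ h), 0, (zero_add m).symm⟩

theorem isMaximal_span_of'_ne_zero [Field k] :
    (Ideal.span (of' k M '' {m | m ≠ 0})).IsMaximal := by
  refine Ideal.isMaximal_iff.mpr ⟨?_, fun J f hle hf hfJ => ?_⟩
  · simp [mem_span_of'_ne_zero_iff]
  rw [mem_span_of'_ne_zero_iff] at hf
  have hsub : f - single 0 (f.coeff 0) ∈ J := hle (mem_span_of'_ne_zero_iff.mpr (by simp))
  have hc : single 0 (f.coeff 0) ∈ J := by simpa using J.sub_mem hfJ hsub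
  simpa [single_mul_single, hf, ← one_def] using J.mul_mem_left (single 0 (f.coeff 0)⁻¹) hc

end AddMonoidAlgebra

theorem AddSubmonoid.subsingleton_addUnits {G : Type*} [AddGroup G] {S : AddSubmonoid G}
    (h : ∀ x ∈ S, -x ∈ S → x = 0) : Subsingleton (AddUnits S) :=
  Subsingleton.addUnits_of_isAddUnit fun a ha => by
    obtain ⟨b, hab⟩ := ha.exists_neg
    refine Subtype.ext <| h a a.2 ?_
    rw [neg_eq_of_add_eq_zero_right (congrArg Subtype.val hab)]
    exact b.2

theorem augIdeal_eq_span_of' {ι : Type*} (E : Type*) [Field E] (Sg : AddSubmonoid (ι → ℤ)) :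
    augIdeal E Sg = Ideal.span (AddMonoidAlgebra.of' E Sg '' {m | m ≠ 0}) := by
  rw [augIdeal]
  congr 1
  ext x
  simp [AddMonoidAlgebra.of'_apply, eq_comm]

theorem augIdeal_isMaximal {ι : Type*} (E : Type*) [Field E] (Sg : AddSubmonoid (ι → ℤ))
    (hsharp : ∀ x ∈ Sg, -x ∈ Sg → x = 0) : (augIdeal E Sg).IsMaximal := by
  have := AddSubmonoid.subsingleton_addUnits hsharp
  rw [augIdeal_eq_span_of']
  exact AddMonoidAlgebra.isMaximal_span_of'_ne_zero

theorem stmt8_general (E : Type*) [Field E]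
    (Sg : AddSubmonoid (ι → ℤ))
    -- 0 is the only invertible element of Σ:
    (hsharp : ∀ x ∈ Sg, -x ∈ Sg → x = 0) :
    IsLocalRing (AdicCompletion (augIdeal E Sg) (AddMonoidAlgebra E ↥Sg)) ∧
    ∀ f : AdicCompletion (augIdeal E Sg) (AddMonoidAlgebra E ↥Sg),
      IsUnit f ↔
        AdicCompletion.eval (augIdeal E Sg) (AddMonoidAlgebra E ↥Sg) 1 f ≠ 0 := by
  have := augIdeal_isMaximal E Sg hsharp
  exact ⟨AdicCompletion.isLocalRing_of_isMaximal,
    fun _ => AdicCompletion.isUnit_iff_val_one_ne_zero⟩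

theorem stmt8 (E : Type*) [Field E] [CharZero E]
    (Sg : AddSubmonoid (ι → ℤ)) (hfg : Sg.FG)
    -- 0 is the only invertible element of Σ:
    (hsharp : ∀ x ∈ Sg, -x ∈ Sg → x = 0)
    -- Σ generates a strongly convex rational cone:
    (hconv : ∀ x ∈ ratConeOfSet (Sg : Set (ι → ℤ)),
      -x ∈ ratConeOfSet (Sg : Set (ι → ℤ)) → x = (0 : ι → ℚ)) :
    IsLocalRing (AdicCompletion (augIdeal E Sg) (AddMonoidAlgebra E ↥Sg)) ∧
    ∀ f : AdicCompletion (augIdeal E Sg) (AddMonoidAlgebra E ↥Sg),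
      IsUnit f ↔
        AdicCompletion.eval (augIdeal E Sg) (AddMonoidAlgebra E ↥Sg) 1 f ≠ 0 :=
  stmt8_general E Sg hsharp

end
end

section
/- Let λ₁, λ₂ ∈ Λ^+_M be rational-order comparable via a collection of M-dominant coweights λ_v with multiplicities n_v ≥ 1, such that w₀^M ∑_v n_v λ_v ≤_M^Q λ₁ − λ₂ ≤_M^Q ∑_v n_v λ_v, and suppose each λ_v lies in Λ^{pos,Q}_U ∩ Λ^+_M. Then λ₁ − λ₂ lies in the rational convex cone generated by Λ^{pos,Q}_U and Λ^{pos,Q}_M, which equals Λ^{pos,Q}_G; i.e. λ₂ ≤_G^Q λ₁. Moreover λ₁ − λ₂ also lies in w₀^M Λ^{pos,Q}_G. -/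
/-!
STATEMENT 19 (Remark `rem:heckeHN` of the paper): suppose `λ₁, λ₂ ∈ Λ^+_M`
satisfy the Harder–Narasimhan sandwich
`w₀^M (∑ n_v λ_v) ≤_M^ℚ λ₁ − λ₂ ≤_M^ℚ ∑ n_v λ_v`
for a collection of M-dominant coweights `λ_v ∈ Λ^{pos,ℚ}_U ∩ Λ^+_M` with
multiplicities `n_v ≥ 1`.  Then `λ₁ − λ₂` lies in the rational cone generated by
`Λ^{pos,ℚ}_U` and `Λ^{pos,ℚ}_M`, which is `Λ^{pos,ℚ}_G` (i.e. `λ₂ ≤_G^ℚ λ₁`),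
and moreover `λ₁ − λ₂ ∈ w₀^M Λ^{pos,ℚ}_G`.

Setup: `Λ⊗ℚ = ι → ℚ`; `ΦG` is the set of positive coroots of `G`, `ΦM ⊆ ΦG`
those of `M`, so `Λ^{pos,ℚ}_U = ratCone (ΦG \ ΦM)`, `Λ^{pos,ℚ}_M = ratCone ΦM`,
`Λ^{pos,ℚ}_G = ratCone ΦG`; `rootsM` gives M-dominance; `w₀` is the longest
element of `W_M`, acting linearly and satisfying `w₀(Λ^{pos,ℚ}_U) = Λ^{pos,ℚ}_U`
and `w₀(Λ^{pos,ℚ}_M) = −Λ^{pos,ℚ}_M`.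
-/

open scoped BigOperators

noncomputable section

variable {ι : Type*} [Fintype ι]

lemma ratCone_zero (Φ : Finset (ι → ℚ)) : (0 : ι → ℚ) ∈ ratCone Φ :=
  ⟨0, fun _ => le_refl 0, by simp⟩

lemma ratCone_add {Φ : Finset (ι → ℚ)} {μ ν : ι → ℚ}
    (hμ : μ ∈ ratCone Φ) (hν : ν ∈ ratCone Φ) : μ + ν ∈ ratCone Φ := by
  obtain ⟨c, hc, rfl⟩ := hμ
  obtain ⟨d, hd, rfl⟩ := hν
  exact ⟨c + d, fun x => add_nonneg (hc x) (hd x), by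
    rw [← Finset.sum_add_distrib]
    exact Finset.sum_congr rfl fun x _ => (add_smul _ _ _).symm⟩

lemma ratCone_smul {Φ : Finset (ι → ℚ)} {μ : ι → ℚ} {r : ℚ}
    (hr : 0 ≤ r) (hμ : μ ∈ ratCone Φ) : r • μ ∈ ratCone Φ := by
  obtain ⟨c, hc, rfl⟩ := hμ
  exact ⟨r • c, fun x => mul_nonneg hr (hc x), by
    rw [Finset.smul_sum]
    exact Finset.sum_congr rfl fun x _ => by simp [smul_smul]⟩

lemma ratCone_mono [DecidableEq ι] {Φ Ψ : Finset (ι → ℚ)} (h : Φ ⊆ Ψ) :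
    ratCone Φ ⊆ ratCone Ψ := by
  rintro μ ⟨c, hc, rfl⟩
  classical
  refine ⟨fun x => if x ∈ Φ then c x else 0, fun x => by dsimp only; split <;> [exact hc x; exact le_refl 0], ?_⟩
  rw [← Finset.sum_subset h (fun x _ hx => by simp [hx])]
  exact Finset.sum_congr rfl fun x hx => by simp [hx]

lemma ratCone_sum {Φ : Finset (ι → ℚ)} {υ : Type*} [Fintype υ]
    (f : υ → (ι → ℚ)) (hf : ∀ v, f v ∈ ratCone Φ) :
    (∑ v, f v) ∈ ratCone Φ :=
  Finset.sum_induction f (· ∈ ratCone Φ) (fun _ _ => ratCone_add)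
    (ratCone_zero Φ) (fun v _ => hf v)

theorem stmt19 [DecidableEq ι]
    (ΦG ΦM rootsM : Finset (ι → ℚ)) (hMG : ΦM ⊆ ΦG)
    -- the longest element w₀^M of W_M:
    (w₀ : (ι → ℚ) ≃ₗ[ℚ] (ι → ℚ))
    (hw₀U : (w₀ : (ι → ℚ) → (ι → ℚ)) '' ratCone (ΦG \ ΦM) = ratCone (ΦG \ ΦM))
    (hw₀M : (w₀ : (ι → ℚ) → (ι → ℚ)) '' ratCone ΦM =
      {x | -x ∈ ratCone ΦM})
    -- λ₁, λ₂ ∈ Λ^+_M: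
    (lam₁ lam₂ : ι → ℚ)
    (hlam₁ : ∀ a ∈ rootsM, 0 ≤ pairQ a lam₁)
    (hlam₂ : ∀ a ∈ rootsM, 0 ≤ pairQ a lam₂)
    -- the collection λ_v with multiplicities n_v ≥ 1:
    (υ : Type*) [Fintype υ] (lam : υ → (ι → ℚ)) (n : υ → ℕ)
    (hn : ∀ v, 1 ≤ n v)
    (hlamU : ∀ v, lam v ∈ ratCone (ΦG \ ΦM))
    (hlamdom : ∀ v, ∀ a ∈ rootsM, 0 ≤ pairQ a (lam v))
    -- the sandwich w₀^M ∑ n_v λ_v ≤_M^ℚ λ₁ − λ₂ ≤_M^ℚ ∑ n_v λ_v: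
    (hlow : (lam₁ - lam₂) - w₀ (∑ v, (n v : ℚ) • lam v) ∈ ratCone ΦM)
    (hhigh : (∑ v, (n v : ℚ) • lam v) - (lam₁ - lam₂) ∈ ratCone ΦM) :
    -- conclusion: λ₂ ≤_G^ℚ λ₁ and λ₁ − λ₂ ∈ w₀^M Λ^{pos,ℚ}_G:
    lam₁ - lam₂ ∈ ratCone ΦG ∧
      lam₁ - lam₂ ∈ (w₀ : (ι → ℚ) → (ι → ℚ)) '' ratCone ΦG := by
  set S : ι → ℚ := ∑ v, (n v : ℚ) • lam v with hS
  have hSU : S ∈ ratCone (ΦG \ ΦM) :=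
    ratCone_sum _ fun v => ratCone_smul (by positivity) (hlamU v)
  have hUG : ratCone (ΦG \ ΦM) ⊆ ratCone ΦG :=
    ratCone_mono (Finset.sdiff_subset)
  have hMGcone : ratCone ΦM ⊆ ratCone ΦG := ratCone_mono hMG
  constructor
  · -- λ₁ - λ₂ = w₀ S + (λ₁ - λ₂ - w₀ S)
    have hw₀S : w₀ S ∈ ratCone (ΦG \ ΦM) := by
      rw [← hw₀U]; exact ⟨S, hSU, rfl⟩
    have := ratCone_add (hUG hw₀S) (hMGcone hlow)
    simpa using this
  · -- λ₁ - λ₂ = w₀ (u + p) where w₀ u = S, w₀ p = -(S - (λ₁ - λ₂))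
    obtain ⟨u, hu, huS⟩ : S ∈ (w₀ : (ι → ℚ) → (ι → ℚ)) '' ratCone (ΦG \ ΦM) := by
      rw [hw₀U]; exact hSU
    obtain ⟨p, hp, hpm⟩ : -(S - (lam₁ - lam₂)) ∈
        (w₀ : (ι → ℚ) → (ι → ℚ)) '' ratCone ΦM := by
      rw [hw₀M]; simpa using hhigh
    refine ⟨u + p, ratCone_add (hUG hu) (hMGcone hp), ?_⟩
    have : w₀ (u + p) = w₀ u + w₀ p := map_add _ _ _
    rw [this, huS, hpm]
    abel

end
end
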